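/- Under assumptions: Ω ⊆ ℝ^N smooth bounded open, s ∈ (0,1), p : Ω̄×Ω̄ → (1,∞) continuous and symmetric with 1 < p⁻ ≤ p⁺ < ∞, r ∈ C(Ω̄) with 1 < r⁻ ≤ r⁺ < p⁻, and λ ∈ ℝ, the set B = {v ∈ W₀* : v + t·(S∘T)v = 0 for some t ∈ [0,1]} is bounded in W₀*, where T = L⁻¹ and ⟨Su, w⟩ = ∫_Ω |u|^{q(x)−2}u w dx − λ ∫_Ω |u|^{r(x)−2}u w dx with q(x) = p(x,x). -/

import Mathlib

/-!
Testing `v + t S(T v) = 0` against `u = T v` gives `ρ(u) + t (∫ |u|^q - λ ∫ |u|^r) = 0`, where `ρ`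
is the Gagliardo modular, since `⟨L u, u⟩ = ρ(u)`. As `r⁺ < p⁻ ≤ q`, the `r`-integral is absorbed
into the `q`-integral up to a constant, so `ρ(u)`, and with it `‖u‖`, is bounded independently
of `v`. The embedding into `L^{q(x)}(Ω)` bounds `‖S u‖` in terms of `‖u‖`, hence `v = -t S u` is
bounded.
-/

open MeasureTheory Real Filter Topology Bornology

/-- The integrand of the fractional `p(x,y)`-Laplacian pairing `⟨Lu, w⟩`. -/
noncomputable def fracKernel {N : ℕ} (s : ℝ)
    (p : EuclideanSpace ℝ (Fin N) × EuclideanSpace ℝ (Fin N) → ℝ)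
    (u w : EuclideanSpace ℝ (Fin N) → ℝ)
    (z : EuclideanSpace ℝ (Fin N) × EuclideanSpace ℝ (Fin N)) : ℝ :=
  |u z.1 - u z.2| ^ (p z - 1) * Real.sign (u z.1 - u z.2) * (w z.1 - w z.2) /
    ‖z.1 - z.2‖ ^ ((N : ℝ) + s * p z)

/-- The pairing `⟨Lu, w⟩` of the fractional `p(x,y)`-Laplacian. -/
noncomputable def fracPairing {N : ℕ} (Ω : Set (EuclideanSpace ℝ (Fin N))) (s : ℝ)
    (p : EuclideanSpace ℝ (Fin N) × EuclideanSpace ℝ (Fin N) → ℝ)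
    (u w : EuclideanSpace ℝ (Fin N) → ℝ) : ℝ :=
  ∫ z in Ω ×ˢ Ω, fracKernel s p u w z

/-- The Gagliardo modular. -/
noncomputable def gagliardoModular {N : ℕ} (Ω : Set (EuclideanSpace ℝ (Fin N))) (s : ℝ)
    (p : EuclideanSpace ℝ (Fin N) × EuclideanSpace ℝ (Fin N) → ℝ)
    (u : EuclideanSpace ℝ (Fin N) → ℝ) : ℝ :=
  ∫ z in Ω ×ˢ Ω, |u z.1 - u z.2| ^ p z / ‖z.1 - z.2‖ ^ ((N : ℝ) + s * p z)

/-- The Gagliardo seminorm with variable exponent. -/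
noncomputable def gagliardoNorm {N : ℕ} (Ω : Set (EuclideanSpace ℝ (Fin N))) (s : ℝ)
    (p : EuclideanSpace ℝ (Fin N) × EuclideanSpace ℝ (Fin N) → ℝ)
    (u : EuclideanSpace ℝ (Fin N) → ℝ) : ℝ :=
  sInf {l : ℝ | 0 < l ∧ gagliardoModular Ω s p (fun x => u x / l) ≤ 1}

/-- The Luxemburg norm on the variable exponent Lebesgue space. -/
noncomputable def luxNorm {N : ℕ} (Ω : Set (EuclideanSpace ℝ (Fin N)))
    (q : EuclideanSpace ℝ (Fin N) → ℝ) (u : EuclideanSpace ℝ (Fin N) → ℝ) : ℝ :=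
  sInf {l : ℝ | 0 < l ∧ (∫ x in Ω, |u x / l| ^ q x) ≤ 1}

namespace Real

theorem sign_mul_self_eq_abs (a : ℝ) : sign a * a = |a| := by
  rcases lt_trichotomy a 0 with h | rfl | h
  · rw [sign_of_neg h, abs_of_neg h, neg_one_mul]
  · simp
  · rw [sign_of_pos h, abs_of_pos h, one_mul]

theorem abs_sign_le_one (a : ℝ) : |sign a| ≤ 1 := by
  rcases sign_apply_eq a with h | h | h <;> simp [h]

theorem rpow_sub_one_mul_self {x : ℝ} (hx : 0 ≤ x) {q : ℝ} (hq : q ≠ 0) :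
    x ^ (q - 1) * x = x ^ q := by
  simpa using (rpow_add' hx (by simpa using hq : q - 1 + 1 ≠ 0)).symm

theorem abs_rpow_sub_one_mul_sign_mul_self (a : ℝ) {q : ℝ} (hq : q ≠ 0) :
    |a| ^ (q - 1) * sign a * a = |a| ^ q := by
  rw [mul_assoc, sign_mul_self_eq_abs, rpow_sub_one_mul_self (abs_nonneg a) hq]

theorem rpow_sub_one_mul_le_add {a b q : ℝ} (ha : 0 ≤ a) (hb : 0 ≤ b) (hq : 1 ≤ q) :
    a ^ (q - 1) * b ≤ a ^ q + b ^ q := by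
  have hq0 : q ≠ 0 := by positivity
  rcases le_total b a with hba | hab
  · calc a ^ (q - 1) * b ≤ a ^ (q - 1) * a := by gcongr
      _ = a ^ q := rpow_sub_one_mul_self ha hq0
      _ ≤ a ^ q + b ^ q := le_add_of_nonneg_right (by positivity)
  · calc a ^ (q - 1) * b ≤ b ^ (q - 1) * b := by gcongr
      _ = b ^ q := rpow_sub_one_mul_self hb hq0
      _ ≤ a ^ q + b ^ q := le_add_of_nonneg_left (by positivity)

theorem abs_abs_rpow_sub_one_mul_sign_mul_le (a b : ℝ) {q : ℝ} (hq : 1 ≤ q) :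
    |(|a| ^ (q - 1) * sign a * b)| ≤ |a| ^ q + |b| ^ q := by
  calc |(|a| ^ (q - 1) * sign a * b)| = |a| ^ (q - 1) * |sign a| * |b| := by
        rw [abs_mul, abs_mul, abs_of_nonneg (by positivity)]
    _ ≤ |a| ^ (q - 1) * 1 * |b| := by gcongr; exact abs_sign_le_one a
    _ ≤ |a| ^ q + |b| ^ q := by
        rw [mul_one]; exact rpow_sub_one_mul_le_add (abs_nonneg a) (abs_nonneg b) hq

theorem rpow_le_one_add_rpow {a r q : ℝ} (ha : 0 ≤ a) (hr : 0 ≤ r) (hrq : r ≤ q) :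
    a ^ r ≤ 1 + a ^ q := by
  rcases le_total a 1 with ha1 | ha1
  · linarith [rpow_le_one ha ha1 hr, rpow_nonneg ha q]
  · linarith [rpow_le_rpow_of_exponent_le ha1 hrq]

theorem rpow_le_max_rpow {x y a b : ℝ} (hx : 0 < x) (ha : a ≤ y) (hb : y ≤ b) :
    x ^ y ≤ max (x ^ a) (x ^ b) := by
  rcases le_total x 1 with hx1 | hx1
  · exact (rpow_le_rpow_of_exponent_ge hx hx1 ha).trans (le_max_left _ _)
  · exact (rpow_le_rpow_of_exponent_le hx1 hb).trans (le_max_right _ _)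

theorem exists_rpow_le_mul_rpow_add {rp pm ε : ℝ} (hrp : rp < pm) (hε : 0 < ε) :
    ∃ K ≥ 0, ∀ a r q : ℝ, 0 ≤ a → 0 ≤ r → r ≤ rp → pm ≤ q → a ^ r ≤ ε * a ^ q + K := by
  set A := max 1 (ε ^ (-(pm - rp)⁻¹))
  have hA1 : 1 ≤ A := le_max_left _ _
  refine ⟨A ^ rp, by positivity, fun a r q ha hr hrrp hq => ?_⟩
  rcases le_total a A with haA | hAa
  · have har : a ^ r ≤ A ^ rp := by
      rcases le_total a 1 with ha1 | ha1
      · exact (rpow_le_one ha ha1 hr).trans (one_le_rpow hA1 (hr.trans hrrp))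
      · exact (rpow_le_rpow_of_exponent_le ha1 hrrp).trans
          (rpow_le_rpow (by linarith) haA (hr.trans hrrp))
    linarith [mul_nonneg hε.le (rpow_nonneg ha q)]
  · have ha1 : 1 ≤ a := hA1.trans hAa
    -- `A` is chosen so that `A ^ (pm - rp) ≥ ε⁻¹`.
    have hεa : ε⁻¹ ≤ a ^ (pm - rp) := by
      calc ε⁻¹ = (ε ^ (-(pm - rp)⁻¹)) ^ (pm - rp) := by
            rw [← rpow_mul hε.le, neg_mul, inv_mul_cancel₀ (by linarith), rpow_neg_one]
        _ ≤ A ^ (pm - rp) := rpow_le_rpow (by positivity) (le_max_right _ _) (by linarith)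
        _ ≤ a ^ (pm - rp) := rpow_le_rpow (by positivity) hAa (by linarith)
    calc a ^ r ≤ a ^ rp := rpow_le_rpow_of_exponent_le ha1 hrrp
      _ = ε * (ε⁻¹ * a ^ rp) := by field_simp
      _ ≤ ε * (a ^ (pm - rp) * a ^ rp) := by gcongr
      _ = ε * a ^ pm := by rw [← rpow_add (by linarith)]; ring_nf
      _ ≤ ε * a ^ q := by gcongr
      _ ≤ ε * a ^ q + A ^ rp := le_add_of_nonneg_right (by positivity)

end Real

section Luxemburg

variable {β : Type*} [MeasurableSpace β] {ν : Measure β} {F e : β → ℝ} {pp : ℝ}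

/-- The Luxemburg norm of the modular `l ↦ ∫ F / l ^ e`, i.e. of any `f` with `|f| ^ e = F`. -/
noncomputable def luxemburgNorm (ν : Measure β) (F e : β → ℝ) : ℝ :=
  sInf {l : ℝ | 0 < l ∧ ∫ z, F z / l ^ e z ∂ν ≤ 1}

theorem integrable_div_rpow (hF : Integrable F ν) (he : Measurable e) (he1 : ∀ z, 1 ≤ e z)
    (hep : ∀ z, e z ≤ pp) {l : ℝ} (hl : 0 < l) : Integrable (fun z => F z / l ^ e z) ν := by
  simp_rw [div_eq_mul_inv, ← Real.inv_rpow hl.le]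
  refine hF.mul_bdd (c := max (l⁻¹ ^ (1 : ℝ)) (l⁻¹ ^ pp))
    (measurable_const.pow he).aestronglyMeasurable (ae_of_all _ fun z => ?_)
  rw [Real.norm_of_nonneg (by positivity)]
  exact Real.rpow_le_max_rpow (inv_pos.2 hl) (he1 z) (hep z)

theorem integral_div_rpow_le (hF0 : ∀ z, 0 ≤ F z) (hF : Integrable F ν) (he1 : ∀ z, 1 ≤ e z)
    {l : ℝ} (hl : 1 ≤ l) : ∫ z, F z / l ^ e z ∂ν ≤ (∫ z, F z ∂ν) / l := by
  rw [← integral_div]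
  refine integral_mono_of_nonneg (ae_of_all _ fun z => div_nonneg (hF0 z) (by positivity))
    (hF.div_const _) (ae_of_all _ fun z => ?_)
  exact div_le_div_of_nonneg_left (hF0 z) (by linarith) (Real.self_le_rpow_of_one_le hl (he1 z))

theorem luxemburgNorm_le_add_one (hF0 : ∀ z, 0 ≤ F z) (he : Measurable e) (he1 : ∀ z, 1 ≤ e z)
    (hep : ∀ z, e z ≤ pp) {M : ℝ} (hM0 : 0 ≤ M) (hFM : ∫ z, F z ∂ν ≤ M) :
    luxemburgNorm ν F e ≤ M + 1 := by
  refine csInf_le ⟨0, fun l hl => hl.1.le⟩ ⟨by linarith, ?_⟩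
  by_cases hG : Integrable (fun z => F z / (M + 1) ^ e z) ν
  · -- `F` is recovered from the integrable `F / (M + 1) ^ e` by a bounded factor.
    have hF : Integrable F ν := by
      refine (hG.mul_bdd (g := fun z => (M + 1) ^ e z) (c := (M + 1) ^ pp)
        (measurable_const.pow he).aestronglyMeasurable (ae_of_all _ fun z => ?_)).congr
        (ae_of_all _ fun z => ?_)
      · rw [Real.norm_of_nonneg (by positivity)]
        exact Real.rpow_le_rpow_of_exponent_le (by linarith) (hep z)
      · exact div_mul_cancel₀ _ (by positivity)
    calc ∫ z, F z / (M + 1) ^ e z ∂ν ≤ (∫ z, F z ∂ν) / (M + 1) :=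
          integral_div_rpow_le hF0 hF he1 (by linarith)
      _ ≤ 1 := by rw [div_le_one (by linarith)]; linarith
  · rw [integral_undef hG]
    exact zero_le_one

theorem integral_le_rpow_of_luxemburgNorm_lt (hF0 : ∀ z, 0 ≤ F z) (hF : Integrable F ν)
    (he : Measurable e) (he1 : ∀ z, 1 ≤ e z) (hep : ∀ z, e z ≤ pp) {b : ℝ} (hb : 1 ≤ b)
    (h : luxemburgNorm ν F e < b) : ∫ z, F z ∂ν ≤ b ^ pp := by
  set I := ∫ z, F z ∂ν
  have hI : 0 ≤ I := integral_nonneg hF0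
  have hne : {l : ℝ | 0 < l ∧ ∫ z, F z / l ^ e z ∂ν ≤ 1}.Nonempty := by
    refine ⟨I + 1, by linarith, (integral_div_rpow_le hF0 hF he1 (by linarith)).trans ?_⟩
    rw [div_le_one (by linarith)]
    linarith
  obtain ⟨l, ⟨hl0, hl1⟩, hlb⟩ := exists_lt_of_csInf_lt hne h
  calc I ≤ ∫ z, b ^ pp * (F z / b ^ e z) ∂ν := by
        refine integral_mono_of_nonneg (ae_of_all _ hF0)
          ((integrable_div_rpow hF he he1 hep (by linarith)).const_mul _) (ae_of_all _ fun z => ?_)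
        calc F z = b ^ e z * (F z / b ^ e z) := (mul_div_cancel₀ _ (by positivity)).symm
          _ ≤ b ^ pp * (F z / b ^ e z) := by
            gcongr
            · exact div_nonneg (hF0 z) (by positivity)
            · exact hep z
    _ = b ^ pp * ∫ z, F z / b ^ e z ∂ν := integral_const_mul _ _
    _ ≤ b ^ pp * ∫ z, F z / l ^ e z ∂ν := by
        refine mul_le_mul_of_nonneg_left ?_ (by positivity)
        refine integral_mono_of_nonneg (ae_of_all _ fun z => div_nonneg (hF0 z) (by positivity))
          (integrable_div_rpow hF he he1 hep hl0) (ae_of_all _ fun z => ?_)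
        exact div_le_div_of_nonneg_left (hF0 z) (by positivity)
          (Real.rpow_le_rpow hl0.le hlb.le (by linarith [he1 z]))
    _ ≤ b ^ pp := mul_le_of_le_one_right (by positivity) hl1

end Luxemburg

theorem luxNorm_eq_luxemburgNorm {N : ℕ} (Ω : Set (EuclideanSpace ℝ (Fin N)))
    (q u : EuclideanSpace ℝ (Fin N) → ℝ) :
    luxNorm Ω q u = luxemburgNorm (volume.restrict Ω) (fun x => |u x| ^ q x) q := by
  refine congrArg sInf (Set.ext fun l => and_congr_right fun hl => ?_)
  rw [integral_congr_ae (ae_of_all _ fun x => by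
    rw [abs_div, abs_of_pos hl, Real.div_rpow (abs_nonneg _) hl.le])]

theorem gagliardoNorm_eq_luxemburgNorm {N : ℕ} (Ω : Set (EuclideanSpace ℝ (Fin N))) (s : ℝ)
    (p : EuclideanSpace ℝ (Fin N) × EuclideanSpace ℝ (Fin N) → ℝ)
    (u : EuclideanSpace ℝ (Fin N) → ℝ) :
    gagliardoNorm Ω s p u = luxemburgNorm (volume.restrict (Ω ×ˢ Ω))
      (fun z => |u z.1 - u z.2| ^ p z / ‖z.1 - z.2‖ ^ ((N : ℝ) + s * p z)) p := by
  refine congrArg sInf (Set.ext fun l => and_congr_right fun hl => ?_)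
  unfold gagliardoModular
  rw [integral_congr_ae (ae_of_all _ fun z => by
    rw [div_sub_div_same, abs_div, abs_of_pos hl, Real.div_rpow (abs_nonneg _) hl.le,
      div_right_comm])]

theorem integral_rpow_le_of_luxNorm_le {N : ℕ} {Ω : Set (EuclideanSpace ℝ (Fin N))}
    {q f : EuclideanSpace ℝ (Fin N) → ℝ} {pp c : ℝ} (hq : Measurable q) (hq1 : ∀ x, 1 ≤ q x)
    (hqp : ∀ x, q x ≤ pp) (hf : Integrable (fun x => |f x| ^ q x) (volume.restrict Ω))
    (hc : 0 ≤ c) (h : luxNorm Ω q f ≤ c) : ∫ x in Ω, |f x| ^ q x ≤ (c + 1) ^ pp :=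
  integral_le_rpow_of_luxemburgNorm_lt (fun _ => by positivity) hf hq hq1 hqp (by linarith)
    (by rw [← luxNorm_eq_luxemburgNorm]; linarith)

theorem gagliardoNorm_le_add_one {N : ℕ} {Ω : Set (EuclideanSpace ℝ (Fin N))} {s pp M : ℝ}
    {p : EuclideanSpace ℝ (Fin N) × EuclideanSpace ℝ (Fin N) → ℝ}
    {u : EuclideanSpace ℝ (Fin N) → ℝ} (hp : Measurable p) (hp1 : ∀ z, 1 ≤ p z)
    (hpp : ∀ z, p z ≤ pp) (hM0 : 0 ≤ M) (h : gagliardoModular Ω s p u ≤ M) :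
    gagliardoNorm Ω s p u ≤ M + 1 := by
  rw [gagliardoNorm_eq_luxemburgNorm]
  exact luxemburgNorm_le_add_one (fun _ => by positivity) hp hp1 hpp hM0 h

theorem fracPairing_self {N : ℕ} (Ω : Set (EuclideanSpace ℝ (Fin N))) (s : ℝ)
    {p : EuclideanSpace ℝ (Fin N) × EuclideanSpace ℝ (Fin N) → ℝ} (hp : ∀ z, p z ≠ 0)
    (u : EuclideanSpace ℝ (Fin N) → ℝ) :
    fracPairing Ω s p u u = gagliardoModular Ω s p u :=
  integral_congr_ae (ae_of_all _ fun z => by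
    rw [fracKernel, Real.abs_rpow_sub_one_mul_sign_mul_self _ (hp z)])

section FiniteMeasure

variable {α : Type*} [MeasurableSpace α] {μ : Measure α} {f r q : α → ℝ}

theorem integral_abs_rpow_sub_one_mul_sign_mul_self (hq : ∀ x, q x ≠ 0) :
    ∫ x, |f x| ^ (q x - 1) * Real.sign (f x) * f x ∂μ = ∫ x, |f x| ^ q x ∂μ :=
  integral_congr_ae (ae_of_all _ fun x => Real.abs_rpow_sub_one_mul_sign_mul_self _ (hq x))

variable [IsFiniteMeasure μ]

theorem abs_integral_rpow_sub_one_mul_sign_mul_le {g : α → ℝ}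
    (hf : Integrable (fun x => |f x| ^ q x) μ) (hg : Integrable (fun x => |g x| ^ q x) μ)
    (hr : ∀ x, 1 ≤ r x) (hrq : ∀ x, r x ≤ q x) :
    |∫ x, |f x| ^ (r x - 1) * Real.sign (f x) * g x ∂μ| ≤
      2 * μ.real Set.univ + ((∫ x, |f x| ^ q x ∂μ) + ∫ x, |g x| ^ q x ∂μ) := by
  have hbound : ∀ x, ‖|f x| ^ (r x - 1) * Real.sign (f x) * g x‖ ≤
      (1 + |f x| ^ q x) + (1 + |g x| ^ q x) := fun x =>
    (Real.abs_abs_rpow_sub_one_mul_sign_mul_le _ _ (hr x)).trans <| add_le_add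
      (Real.rpow_le_one_add_rpow (abs_nonneg _) (by linarith [hr x]) (hrq x))
      (Real.rpow_le_one_add_rpow (abs_nonneg _) (by linarith [hr x]) (hrq x))
  have hf1 : Integrable (fun x => 1 + |f x| ^ q x) μ := (integrable_const 1).add hf
  have hg1 : Integrable (fun x => 1 + |g x| ^ q x) μ := (integrable_const 1).add hg
  calc _ ≤ ∫ x, (1 + |f x| ^ q x) + (1 + |g x| ^ q x) ∂μ :=
        norm_integral_le_of_norm_le (hf1.add hg1) (ae_of_all _ hbound)
    _ = _ := by
        rw [integral_add hf1 hg1, integral_add (integrable_const _) hf,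
          integral_add (integrable_const _) hg, integral_const, smul_eq_mul, mul_one]
        ring

theorem le_of_add_mul_integral_sub_eq_zero {ρ t lam K : ℝ} (ht : t ∈ Set.Icc (0 : ℝ) 1)
    (hK0 : 0 ≤ K) (hf : Integrable (fun x => |f x| ^ q x) μ)
    (hK : ∀ x, |f x| ^ r x ≤ (1 + |lam|)⁻¹ * |f x| ^ q x + K)
    (h : ρ + t * ((∫ x, |f x| ^ q x ∂μ) - lam * ∫ x, |f x| ^ r x ∂μ) = 0) :
    ρ ≤ |lam| * (K * μ.real Set.univ) := by
  set Iq := ∫ x, |f x| ^ q x ∂μ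
  set Ir := ∫ x, |f x| ^ r x ∂μ
  have hIq : 0 ≤ Iq := integral_nonneg fun x => by positivity
  have hIr : 0 ≤ Ir := integral_nonneg fun x => by positivity
  have hIrq : Ir ≤ (1 + |lam|)⁻¹ * Iq + K * μ.real Set.univ := by
    calc Ir ≤ ∫ x, (1 + |lam|)⁻¹ * |f x| ^ q x + K ∂μ :=
          integral_mono_of_nonneg (ae_of_all _ fun x => by positivity)
            ((hf.const_mul _).add (integrable_const K)) (ae_of_all _ hK)
      _ = (1 + |lam|)⁻¹ * Iq + K * μ.real Set.univ := by
          rw [integral_add (hf.const_mul _) (integrable_const K), integral_const_mul,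
            integral_const, smul_eq_mul, mul_comm K]
  have hlamIr : lam * Ir ≤ Iq + |lam| * (K * μ.real Set.univ) := by
    have hε : |lam| * (1 + |lam|)⁻¹ ≤ 1 := by
      rw [← div_eq_mul_inv, div_le_one (by positivity)]
      linarith
    calc lam * Ir ≤ |lam| * Ir := by gcongr; exact le_abs_self lam
      _ ≤ |lam| * ((1 + |lam|)⁻¹ * Iq + K * μ.real Set.univ) := by gcongr
      _ = |lam| * (1 + |lam|)⁻¹ * Iq + |lam| * (K * μ.real Set.univ) := by ring
      _ ≤ Iq + |lam| * (K * μ.real Set.univ) := by gcongr; exact mul_le_of_le_one_left hIq hε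
  have hM : 0 ≤ |lam| * (K * μ.real Set.univ) := by positivity
  nlinarith [ht.1, ht.2]

theorem norm_le_of_forall_eq_integral_sub {X : Type*} [NormedAddCommGroup X] [NormedSpace ℝ X]
    {φ : StrongDual ℝ X} {j : X → α → ℝ} {lam D : ℝ}
    (hφ : ∀ w, φ w = (∫ x, |f x| ^ (q x - 1) * Real.sign (f x) * j w x ∂μ) -
      lam * ∫ x, |f x| ^ (r x - 1) * Real.sign (f x) * j w x ∂μ)
    (hq : ∀ x, 1 ≤ q x) (hr : ∀ x, 1 ≤ r x) (hrq : ∀ x, r x ≤ q x)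
    (hf : Integrable (fun x => |f x| ^ q x) μ) (hj : ∀ w, Integrable (fun x => |j w x| ^ q x) μ)
    (hD0 : 0 ≤ D) (hD : ∀ w, ‖w‖ = 1 → ∫ x, |j w x| ^ q x ∂μ ≤ D) :
    ‖φ‖ ≤ (1 + |lam|) * (2 * μ.real Set.univ + ((∫ x, |f x| ^ q x ∂μ) + D)) := by
  have hIf : 0 ≤ ∫ x, |f x| ^ q x ∂μ := integral_nonneg fun x => by positivity
  refine ContinuousLinearMap.opNorm_le_of_unit_norm (by positivity) fun w hw => ?_
  have hbound : ∀ {r : α → ℝ}, (∀ x, 1 ≤ r x) → (∀ x, r x ≤ q x) →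
      |∫ x, |f x| ^ (r x - 1) * Real.sign (f x) * j w x ∂μ| ≤
        2 * μ.real Set.univ + ((∫ x, |f x| ^ q x ∂μ) + D) := fun hr hrq =>
    (abs_integral_rpow_sub_one_mul_sign_mul_le hf (hj w) hr hrq).trans (by linarith [hD w hw])
  rw [hφ, Real.norm_eq_abs]
  calc _ ≤ |∫ x, |f x| ^ (q x - 1) * Real.sign (f x) * j w x ∂μ| +
        |lam| * |∫ x, |f x| ^ (r x - 1) * Real.sign (f x) * j w x ∂μ| := by
        rw [← abs_mul]; exact abs_sub _ _
    _ ≤ _ := by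
        rw [add_mul, one_mul]
        gcongr
        exacts [hbound hq fun _ => le_rfl, hbound hr hrq]

end FiniteMeasure

theorem stmt14_general {N : ℕ}
    (Ω : Set (EuclideanSpace ℝ (Fin N)))
    (hΩb : IsBounded Ω)
    (s : ℝ)
    (p : EuclideanSpace ℝ (Fin N) × EuclideanSpace ℝ (Fin N) → ℝ)
    (hpc : Continuous p)
    (pm pp : ℝ) (hpm : 1 < pm) (hpbounds : ∀ z, pm ≤ p z ∧ p z ≤ pp)
    (r : EuclideanSpace ℝ (Fin N) → ℝ)
    (rm rp : ℝ) (hrm : 1 < rm) (hrp : rp < pm)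
    (hrbounds : ∀ x, rm ≤ r x ∧ r x ≤ rp)
    (lam : ℝ)
    -- `W₀` is represented abstractly by a reflexive Banach space `X` of functions:
    (X : Type*) [NormedAddCommGroup X] [NormedSpace ℝ X]
    (j : X →ₗ[ℝ] (EuclideanSpace ℝ (Fin N) → ℝ))
    -- the norm of `X` is the Gagliardo seminorm
    (hnorm : ∀ u : X, ‖u‖ = gagliardoNorm Ω s p (j u))
    -- the (compact) embedding `W₀ ↪ L^{q(x)}(Ω)`, `q(x) = p(x,x)`
    (hemb : ∃ C > 0, ∀ u : X, luxNorm Ω (fun x => p (x, x)) (j u) ≤ C * ‖u‖)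
    (hint : ∀ u : X, Integrable (fun x => |j u x| ^ p (x, x)) (volume.restrict Ω))
    -- the operator `L` associated to the fractional `p(x)`-Laplacian
    (L : X → StrongDual ℝ X)
    (hL : ∀ u w : X, L u w = fracPairing Ω s p (j u) (j w))
    -- `T = L⁻¹`
    (T : StrongDual ℝ X → X)
    (hT : ∀ v, L (T v) = v)
    -- the operator `S`
    (S : X → StrongDual ℝ X)
    (hS : ∀ u w : X, S u w =
      (∫ x in Ω, |j u x| ^ (p (x, x) - 1) * Real.sign (j u x) * j w x) -
        lam * ∫ x in Ω, |j u x| ^ (r x - 1) * Real.sign (j u x) * j w x) :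
    IsBounded {v : StrongDual ℝ X |
      ∃ t ∈ Set.Icc (0 : ℝ) 1, v + t • S (T v) = 0} := by
  obtain ⟨C, hC0, hembC⟩ := hemb
  have : IsFiniteMeasure (volume.restrict Ω) :=
    isFiniteMeasure_restrict.2 hΩb.measure_lt_top.ne
  set μΩ := (volume.restrict Ω).real Set.univ
  have hp1 : ∀ z, 1 ≤ p z := fun z => hpm.le.trans (hpbounds z).1
  have hr1 : ∀ x, 1 ≤ r x := fun x => hrm.le.trans (hrbounds x).1
  have hrq : ∀ x, r x ≤ p (x, x) := fun x => (hrbounds x).2.trans (hrp.le.trans (hpbounds _).1)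
  have hpp : 0 ≤ pp := by linarith [hp1 0, (hpbounds 0).2]
  have hmodq : ∀ w, ∫ x in Ω, |j w x| ^ p (x, x) ≤ (C * ‖w‖ + 1) ^ pp := fun w =>
    integral_rpow_le_of_luxNorm_le (by fun_prop : Continuous fun x => p (x, x)).measurable
      (fun _ => hp1 _) (fun _ => (hpbounds _).2) (hint w) (by positivity) (hembC w)
  have hSu : ∀ u, ‖S u‖ ≤ (1 + |lam|) * (2 * μΩ + ((C * ‖u‖ + 1) ^ pp + (C + 1) ^ pp)) :=
    fun u => (norm_le_of_forall_eq_integral_sub (D := (C + 1) ^ pp) (hS u) (fun _ => hp1 _) hr1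
      hrq (hint u) hint (by positivity) (fun w hw => by simpa [hw] using hmodq w)).trans
      (by gcongr; exact hmodq u)
  obtain ⟨K, hK0, hK⟩ := Real.exists_rpow_le_mul_rpow_add hrp (ε := (1 + |lam|)⁻¹) (by positivity)
  set M := |lam| * (K * μΩ)
  refine (Metric.isBounded_closedBall (x := (0 : StrongDual ℝ X))
    (r := (1 + |lam|) * (2 * μΩ + ((C * (M + 1) + 1) ^ pp + (C + 1) ^ pp)))).subset ?_
  rintro v ⟨t, ht, hv⟩
  set u := T v
  have hLu : L u + t • S u = 0 := by rw [hT]; exact hv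
  have hmod : gagliardoModular Ω s p (j u) ≤ M := by
    refine le_of_add_mul_integral_sub_eq_zero ht hK0 (hint u) (fun x => hK _ _ _ (abs_nonneg _)
      (by linarith [hr1 x]) (hrbounds x).2 (hpbounds _).1) ?_
    have h : L u u + t * S u u = 0 := by simpa using congrArg (fun φ : StrongDual ℝ X => φ u) hLu
    rwa [hL, hS, fracPairing_self _ _ (fun z => (zero_lt_one.trans_le (hp1 z)).ne'),
      integral_abs_rpow_sub_one_mul_sign_mul_self (fun x => (zero_lt_one.trans_le (hp1 _)).ne'),
      integral_abs_rpow_sub_one_mul_sign_mul_self (fun x => (zero_lt_one.trans_le (hr1 x)).ne')]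
      at h
  have hu : ‖u‖ ≤ M + 1 := hnorm u ▸
    gagliardoNorm_le_add_one hpc.measurable hp1 (fun z => (hpbounds z).2) (by positivity) hmod
  rw [mem_closedBall_zero_iff, eq_neg_of_add_eq_zero_left hv, norm_neg, norm_smul,
    Real.norm_of_nonneg ht.1]
  calc t * ‖S u‖ ≤ ‖S u‖ := mul_le_of_le_one_left (norm_nonneg _) ht.2
    _ ≤ _ := (hSu u).trans (by gcongr)

theorem stmt14 {N : ℕ} (hN : 2 ≤ N)
    (Ω : Set (EuclideanSpace ℝ (Fin N))) (hΩo : IsOpen Ω)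
    (hΩb : IsBounded Ω) (hΩne : Ω.Nonempty)
    (s : ℝ) (hs : s ∈ Set.Ioo (0 : ℝ) 1)
    (p : EuclideanSpace ℝ (Fin N) × EuclideanSpace ℝ (Fin N) → ℝ)
    (hpc : Continuous p) (hsym : ∀ x y, p (x, y) = p (y, x))
    (pm pp : ℝ) (hpm : 1 < pm) (hpbounds : ∀ z, pm ≤ p z ∧ p z ≤ pp)
    (r : EuclideanSpace ℝ (Fin N) → ℝ) (hrc : Continuous r)
    (rm rp : ℝ) (hrm : 1 < rm) (hrp : rp < pm)
    (hrbounds : ∀ x, rm ≤ r x ∧ r x ≤ rp)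
    (lam : ℝ)
    -- `W₀` is represented abstractly by a reflexive Banach space `X` of functions:
    (X : Type*) [NormedAddCommGroup X] [NormedSpace ℝ X] [CompleteSpace X]
    (hrefl : Function.Surjective (NormedSpace.inclusionInDoubleDual ℝ X))
    (j : X →ₗ[ℝ] (EuclideanSpace ℝ (Fin N) → ℝ))
    (hjm : ∀ u, Measurable (j u))
    -- the norm of `X` is the Gagliardo seminorm
    (hnorm : ∀ u : X, ‖u‖ = gagliardoNorm Ω s p (j u))
    -- the (compact) embedding `W₀ ↪ L^{q(x)}(Ω)`, `q(x) = p(x,x)`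
    (hemb : ∃ C > 0, ∀ u : X, luxNorm Ω (fun x => p (x, x)) (j u) ≤ C * ‖u‖)
    (hint : ∀ u : X, Integrable (fun x => |j u x| ^ p (x, x)) (volume.restrict Ω))
    -- the operator `L` associated to the fractional `p(x)`-Laplacian
    (L : X → StrongDual ℝ X)
    (hL : ∀ u w : X, L u w = fracPairing Ω s p (j u) (j w))
    -- `T = L⁻¹`
    (T : StrongDual ℝ X → X)
    (hT : ∀ v, L (T v) = v) (hTL : ∀ u, T (L u) = u)
    -- the operator `S`
    (S : X → StrongDual ℝ X)
    (hS : ∀ u w : X, S u w =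
      (∫ x in Ω, |j u x| ^ (p (x, x) - 1) * Real.sign (j u x) * j w x) -
        lam * ∫ x in Ω, |j u x| ^ (r x - 1) * Real.sign (j u x) * j w x) :
    IsBounded {v : StrongDual ℝ X |
      ∃ t ∈ Set.Icc (0 : ℝ) 1, v + t • S (T v) = 0} :=
  stmt14_general Ω hΩb s p hpc pm pp hpm hpbounds r rm rp hrm hrp hrbounds lam X j hnorm hemb hint L
    hL T hT S hS
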